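/- (Moré–Sorensen optimality conditions, necessity) If s* is a global minimizer of Q(s) = gᵀs + ½ sᵀBs over {s : ‖s‖₂ ≤ δ}, then there exists σ* ≥ 0 such that B + σ*I is positive semidefinite, (B + σ*I)s* = −g, and σ*(δ − ‖s*‖₂) = 0. -/

import Mathlib

/-!
Let `v = g + B s*` be the gradient of `Q` at `s*`. Since the ball is convex, `v ⬝ (w - s*) ≥ 0`
for every feasible `w`; taking `w = -δ v / ‖v‖` gives `v ⬝ s* ≤ -δ ‖v‖`, which together with
`‖s*‖ ≤ δ` forces `v = -σ s*` for `σ = ‖v‖ / δ`, and then `σ (δ - ‖s*‖) = 0`.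

With `M = B + σ I` and `M s* = -g`, one has
`Q(s* + u) - Q(s*) = ½ uᵀ M u - ½ σ (‖s* + u‖² - ‖s*‖²)`.
If `‖s*‖ < δ` then `σ = 0` and `uᵀ M u ≥ 0` for all small `u`. Otherwise `uᵀ M u ≥ 0` for every
chord `u` from `s*` of the sphere of radius `‖s*‖`; every direction not orthogonal to `s*` is such
a chord, and those directions are dense.
-/

open Matrix

noncomputable def norm2 {m : ℕ} (x : Fin m → ℝ) : ℝ := Real.sqrt (∑ i, x i ^ 2)

open Filter Topology Set

section QuadraticModel

variable {ι : Type*} [Fintype ι]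

noncomputable def quadModel (g : ι → ℝ) (B : Matrix ι ι ℝ) (s : ι → ℝ) : ℝ :=
  g ⬝ᵥ s + 1 / 2 * (s ⬝ᵥ B *ᵥ s)

theorem dotProduct_mulVec_comm_of_transpose_eq {B : Matrix ι ι ℝ} (hB : Bᵀ = B) (x y : ι → ℝ) :
    x ⬝ᵥ B *ᵥ y = y ⬝ᵥ B *ᵥ x := by
  simpa [hB] using dotProduct_transpose_mulVec B x y

theorem smul_dotProduct_mulVec_smul (M : Matrix ι ι ℝ) (t : ℝ) (x : ι → ℝ) :
    (t • x) ⬝ᵥ M *ᵥ (t • x) = t ^ 2 * (x ⬝ᵥ M *ᵥ x) := by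
  simp only [mulVec_smul, dotProduct_smul, smul_dotProduct, smul_eq_mul]
  ring

theorem quadModel_add {B : Matrix ι ι ℝ} (hB : Bᵀ = B) (g s u : ι → ℝ) :
    quadModel g B (s + u) =
      quadModel g B s + ((g + B *ᵥ s) ⬝ᵥ u + 1 / 2 * (u ⬝ᵥ B *ᵥ u)) := by
  simp only [quadModel, mulVec_add, dotProduct_add, add_dotProduct,
    dotProduct_comm (B *ᵥ s) u, dotProduct_mulVec_comm_of_transpose_eq hB u s]
  ring

theorem quadModel_add_of_mulVec_eq_neg [DecidableEq ι] {B : Matrix ι ι ℝ} (hB : Bᵀ = B)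
    {g s : ι → ℝ} {σ : ℝ} (hs : (B + σ • 1) *ᵥ s = -g) (u : ι → ℝ) :
    quadModel g B (s + u) = quadModel g B s + 1 / 2 * (u ⬝ᵥ (B + σ • 1) *ᵥ u)
      - σ / 2 * ((s + u) ⬝ᵥ (s + u) - s ⬝ᵥ s) := by
  have hv : g + B *ᵥ s = -σ • s := by
    rw [add_mulVec, smul_mulVec, one_mulVec] at hs
    rw [neg_smul, eq_neg_iff_add_eq_zero, add_assoc, hs, add_neg_cancel]
  rw [quadModel_add hB, hv]
  simp only [add_mulVec, smul_mulVec, one_mulVec, dotProduct_add, add_dotProduct,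
    dotProduct_smul, smul_dotProduct, smul_eq_mul, dotProduct_comm u s]
  ring

theorem IsMinOn.gradient_dotProduct_sub_nonneg {B : Matrix ι ι ℝ} (hB : Bᵀ = B) {g s w : ι → ℝ}
    {K : Set (ι → ℝ)} (hK : Convex ℝ K) (hmin : IsMinOn (quadModel g B) K s) (hs : s ∈ K)
    (hw : w ∈ K) : 0 ≤ (g + B *ᵥ s) ⬝ᵥ (w - s) := by
  set d := w - s
  have hsegment : ∀ t ∈ Ioc (0 : ℝ) 1,
      0 ≤ (g + B *ᵥ s) ⬝ᵥ d + t * (d ⬝ᵥ B *ᵥ d / 2) := by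
    rintro t ⟨ht₀, ht₁⟩
    have hle := isMinOn_iff.mp hmin _ (hK.add_smul_sub_mem hs hw ⟨ht₀.le, ht₁⟩)
    rw [quadModel_add hB, dotProduct_smul, smul_dotProduct_mulVec_smul, smul_eq_mul] at hle
    refine nonneg_of_mul_nonneg_right ?_ ht₀
    linarith
  refine ge_of_tendsto (x := 𝓝[>] 0) ?_ (mem_of_superset (Ioc_mem_nhdsGT one_pos) hsegment)
  exact tendsto_nhdsWithin_of_tendsto_nhds (Continuous.tendsto' (by fun_prop) _ _ (by simp))

theorem dotProduct_mulVec_nonneg_of_eventually {M : Matrix ι ι ℝ}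
    (h : ∀ᶠ u in 𝓝 0, 0 ≤ u ⬝ᵥ M *ᵥ u) (x : ι → ℝ) : 0 ≤ x ⬝ᵥ M *ᵥ x := by
  have hsmul : Tendsto (fun t : ℝ => t • x) (𝓝[≠] 0) (𝓝 0) :=
    tendsto_nhdsWithin_of_tendsto_nhds (Continuous.tendsto' (by fun_prop) _ _ (by simp))
  obtain ⟨t, ht, ht0 : t ≠ 0⟩ := ((hsmul.eventually h).and self_mem_nhdsWithin).exists
  rw [smul_dotProduct_mulVec_smul] at ht
  exact nonneg_of_mul_nonneg_right ht (by positivity)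

theorem dotProduct_mulVec_nonneg_of_dotProduct_ne_zero {M : Matrix ι ι ℝ} {s : ι → ℝ}
    (h : ∀ u, (s + u) ⬝ᵥ (s + u) = s ⬝ᵥ s → 0 ≤ u ⬝ᵥ M *ᵥ u) {x : ι → ℝ} (hx : s ⬝ᵥ x ≠ 0) :
    0 ≤ x ⬝ᵥ M *ᵥ x := by
  have hxx : x ⬝ᵥ x ≠ 0 := by
    rintro h0
    rw [dotProduct_self_eq_zero.mp h0, dotProduct_zero] at hx
    exact hx rfl
  -- `s + t • x` is the second point where the line `s + ℝ x` meets the sphere of radius `‖s‖`.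
  set t := -2 * (s ⬝ᵥ x) / (x ⬝ᵥ x)
  have ht : t ≠ 0 := div_ne_zero (by simpa using hx) hxx
  have hsphere : (s + t • x) ⬝ᵥ (s + t • x) = s ⬝ᵥ s := by
    simp only [dotProduct_add, add_dotProduct, dotProduct_smul, smul_dotProduct, smul_eq_mul,
      dotProduct_comm x s, t]
    field_simp
    ring
  have := h _ hsphere
  rw [smul_dotProduct_mulVec_smul] at this
  exact nonneg_of_mul_nonneg_right this (by positivity)

theorem dotProduct_mulVec_nonneg_of_sphere {M : Matrix ι ι ℝ} {s : ι → ℝ} (hs : s ≠ 0)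
    (h : ∀ u, (s + u) ⬝ᵥ (s + u) = s ⬝ᵥ s → 0 ≤ u ⬝ᵥ M *ᵥ u) (x : ι → ℝ) :
    0 ≤ x ⬝ᵥ M *ᵥ x := by
  by_cases hx : s ⬝ᵥ x = 0
  · have hss : s ⬝ᵥ s ≠ 0 := fun h0 => hs (dotProduct_self_eq_zero.mp h0)
    have hperturb : ∀ ε ∈ Ioi (0 : ℝ), 0 ≤ (x + ε • s) ⬝ᵥ M *ᵥ (x + ε • s) := by
      intro ε hε
      refine dotProduct_mulVec_nonneg_of_dotProduct_ne_zero h ?_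
      rw [dotProduct_add, dotProduct_smul, hx, smul_eq_mul, zero_add]
      exact mul_ne_zero (ne_of_gt hε) hss
    refine ge_of_tendsto (x := 𝓝[>] 0) ?_ (eventually_nhdsWithin_of_forall hperturb)
    exact tendsto_nhdsWithin_of_tendsto_nhds (Continuous.tendsto' (by fun_prop) _ _ (by simp))
  · exact dotProduct_mulVec_nonneg_of_dotProduct_ne_zero h hx

end QuadraticModel

section Norm2

variable {m : ℕ}

theorem norm2_eq_norm (x : Fin m → ℝ) :
    norm2 x = ‖(WithLp.toLp 2 x : EuclideanSpace ℝ (Fin m))‖ := by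
  simp [norm2, EuclideanSpace.norm_eq]

theorem norm2_nonneg (x : Fin m → ℝ) : 0 ≤ norm2 x := Real.sqrt_nonneg _

theorem norm2_eq_sqrt_dotProduct (x : Fin m → ℝ) : norm2 x = √(x ⬝ᵥ x) := by
  simp [norm2, dotProduct, sq]

theorem sq_norm2 (x : Fin m → ℝ) : norm2 x ^ 2 = x ⬝ᵥ x := by
  rw [norm2, Real.sq_sqrt (by positivity)]
  simp [dotProduct, sq]

theorem norm2_smul (a : ℝ) (x : Fin m → ℝ) : norm2 (a • x) = |a| * norm2 x := by
  simp [norm2_eq_norm, norm_smul]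

theorem continuous_norm2 : Continuous (norm2 (m := m)) := by
  unfold norm2; fun_prop

theorem convex_norm2_le (δ : ℝ) : Convex ℝ {x : Fin m → ℝ | norm2 x ≤ δ} := by
  simpa [Set.preimage, norm2_eq_norm] using
    (convex_closedBall (0 : EuclideanSpace ℝ (Fin m)) δ).is_linear_preimage
      (f := WithLp.toLp 2) ⟨fun _ _ => rfl, fun _ _ => rfl⟩

theorem eq_neg_smul_of_forall_dotProduct_sub_nonneg {δ : ℝ} (hδ : 0 < δ) {v s : Fin m → ℝ}
    (hs : norm2 s ≤ δ) (h : ∀ w, norm2 w ≤ δ → 0 ≤ v ⬝ᵥ (w - s)) :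
    v = -(norm2 v / δ) • s := by
  rcases (norm2_nonneg v).eq_or_lt with hc | hc
  · have hv : v = 0 := dotProduct_self_eq_zero.mp (by rw [← sq_norm2, ← hc]; ring)
    rw [← hc, hv]
    simp
  have hvs : v ⬝ᵥ s ≤ -(δ * norm2 v) := by
    have hw : norm2 (-(δ / norm2 v) • v) ≤ δ := by
      rw [norm2_smul, abs_neg, abs_of_pos (div_pos hδ hc), div_mul_cancel₀ _ hc.ne']
    have hvw : v ⬝ᵥ (-(δ / norm2 v) • v) = -(δ * norm2 v) := by
      rw [dotProduct_smul, smul_eq_mul, ← sq_norm2]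
      field_simp
    have := h _ hw
    rw [dotProduct_sub, hvw] at this
    linarith
  have hss : s ⬝ᵥ s ≤ δ ^ 2 := sq_norm2 s ▸ pow_le_pow_left₀ (norm2_nonneg s) hs 2
  -- `‖δ • v + ‖v‖ • s‖² = δ²‖v‖² + 2δ‖v‖ (v ⬝ᵥ s) + ‖v‖²‖s‖² ≤ δ²‖v‖² - 2δ²‖v‖² + ‖v‖²δ² = 0`
  have hzero : (δ • v + norm2 v • s) ⬝ᵥ (δ • v + norm2 v • s) = 0 := by
    refine le_antisymm ?_ (sq_norm2 _ ▸ sq_nonneg _)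
    simp only [dotProduct_add, add_dotProduct, dotProduct_smul, smul_dotProduct, smul_eq_mul,
      dotProduct_comm s v, ← sq_norm2 v]
    nlinarith [mul_le_mul_of_nonneg_left hvs (by positivity : (0 : ℝ) ≤ 2 * δ * norm2 v),
      mul_le_mul_of_nonneg_left hss (by positivity : (0 : ℝ) ≤ norm2 v ^ 2)]
  have hδv : δ • v = -(norm2 v • s) := eq_neg_of_add_eq_zero_left (dotProduct_self_eq_zero.mp hzero)
  calc v = δ⁻¹ • (δ • v) := (inv_smul_smul₀ hδ.ne' v).symm
    _ = -(norm2 v / δ) • s := by rw [hδv, smul_neg, smul_smul, neg_smul, inv_mul_eq_div]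

theorem posSemidef_of_isMinOn {B : Matrix (Fin m) (Fin m) ℝ} (hB : Bᵀ = B) {g s : Fin m → ℝ}
    {δ σ : ℝ} (hδ : 0 < δ) (hMs : (B + σ • 1) *ᵥ s = -g) (hcompl : σ * (δ - norm2 s) = 0)
    (hs : norm2 s ≤ δ) (hmin : IsMinOn (quadModel g B) {w | norm2 w ≤ δ} s) :
    (B + σ • (1 : Matrix (Fin m) (Fin m) ℝ)).PosSemidef := by
  have hfeasible : ∀ u, norm2 (s + u) ≤ δ → 0 ≤ σ * ((s + u) ⬝ᵥ (s + u) - s ⬝ᵥ s) →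
      0 ≤ u ⬝ᵥ (B + σ • 1) *ᵥ u := by
    intro u hu hσu
    have := isMinOn_iff.mp hmin _ hu
    rw [quadModel_add_of_mulVec_eq_neg hB hMs] at this
    linarith
  refine .of_dotProduct_mulVec_nonneg ?_ fun x => ?_
  · simp [IsHermitian, hB]
  rw [star_trivial]
  rcases hs.lt_or_eq with hlt | heq
  · have hσ : σ = 0 := (mul_eq_zero.mp hcompl).resolve_right (by linarith)
    have hinterior : ∀ᶠ u in 𝓝 0, norm2 (s + u) < δ :=
      (continuous_norm2.comp (continuous_const_add s)).continuousAt.eventually_lt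
        continuousAt_const (by simpa using hlt)
    refine dotProduct_mulVec_nonneg_of_eventually ?_ x
    filter_upwards [hinterior] with u hu
    exact hfeasible u hu.le (by simp [hσ])
  · have hs0 : s ≠ 0 := by
      rintro rfl
      simp [norm2] at heq
      linarith
    refine dotProduct_mulVec_nonneg_of_sphere hs0 (fun u hu => hfeasible u ?_ ?_) x
    · rwa [norm2_eq_sqrt_dotProduct, hu, ← norm2_eq_sqrt_dotProduct]
    · rw [hu, sub_self, mul_zero]

end Norm2

/-- Moré–Sorensen optimality conditions: necessity. -/
theorem more_sorensen_necessity {n : ℕ}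
    (B : Matrix (Fin n) (Fin n) ℝ) (hB : Bᵀ = B)
    (g : Fin n → ℝ) (δ : ℝ) (hδ : 0 < δ)
    (Q : (Fin n → ℝ) → ℝ)
    (hQ : Q = fun s => g ⬝ᵥ s + (1 / 2) * (s ⬝ᵥ B.mulVec s))
    (sstar : Fin n → ℝ) (hfeas : norm2 sstar ≤ δ)
    (hmin : ∀ s : Fin n → ℝ, norm2 s ≤ δ → Q sstar ≤ Q s) :
    ∃ σ : ℝ, 0 ≤ σ ∧
      (B + σ • (1 : Matrix (Fin n) (Fin n) ℝ)).PosSemidef ∧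
      (B + σ • (1 : Matrix (Fin n) (Fin n) ℝ)).mulVec sstar = -g ∧
      σ * (δ - norm2 sstar) = 0 := by
  subst hQ
  have hminOn : IsMinOn (quadModel g B) {s | norm2 s ≤ δ} sstar := isMinOn_iff.mpr hmin
  set σ := norm2 (g + B *ᵥ sstar) / δ with hσ_def
  have hv : g + B *ᵥ sstar = -σ • sstar :=
    eq_neg_smul_of_forall_dotProduct_sub_nonneg hδ hfeas fun w hw =>
      hminOn.gradient_dotProduct_sub_nonneg hB (convex_norm2_le δ) hfeas hw
  have hσ : 0 ≤ σ := div_nonneg (norm2_nonneg _) hδ.le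
  have hMs : (B + σ • 1) *ᵥ sstar = -g := by
    rw [add_mulVec, smul_mulVec, one_mulVec, ← neg_neg (σ • sstar), ← neg_smul, ← hv]
    abel
  have hcompl : σ * (δ - norm2 sstar) = 0 := by
    have hnorm := congrArg norm2 hv
    rw [norm2_smul, abs_neg, abs_of_nonneg hσ] at hnorm
    rw [mul_sub, ← hnorm, hσ_def, div_mul_cancel₀ _ hδ.ne', sub_self]
  exact ⟨σ, hσ, posSemidef_of_isMinOn hB hδ hMs hcompl hfeas hminOn, hMs, hcompl⟩
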